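/- The infinitary rule R6 preserves validity: for every necessity form η, every group G ⊆ A, and every formula φ of L_CoRGAL, if for every G-announcement ψ_G the formula η(⟨A∖G, ψ_G⟩φ) is valid, then η([⟨G⟩]φ) is valid. -/
import Mathlib


/- Formalization of Coalition and Relativised Group Announcement Logic (CoRGAL). -/

namespace CoRGAL

/-- Purely epistemic formulas (the fragment L_EL). -/
inductive EForm (Agt : Type) : Type
  | atom : ℕ → EForm Agt
  | neg  : EForm Agt → EForm Agt
  | and  : EForm Agt → EForm Agt → EForm Agt
  | know : Agt → EForm Agt → EForm Agt

/-- Formulas of L_CoRGAL: atoms, ¬, ∧, K_a, [φ]ψ, [G,χ]φ, [⟨G⟩]φ. -/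
inductive Form (Agt : Type) : Type
  | atom  : ℕ → Form Agt
  | neg   : Form Agt → Form Agt
  | and   : Form Agt → Form Agt → Form Agt
  | know  : Agt → Form Agt → Form Agt
  | ann   : Form Agt → Form Agt → Form Agt          -- [φ]ψ
  | group : Finset Agt → Form Agt → Form Agt → Form Agt  -- [G,χ]φ
  | coal  : Finset Agt → Form Agt → Form Agt        -- [⟨G⟩]φ

variable {Agt : Type}

def Form.imp (φ ψ : Form Agt) : Form Agt := .neg (.and φ (.neg ψ))
def Form.iff' (φ ψ : Form Agt) : Form Agt := .and (φ.imp ψ) (ψ.imp φ)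
def Form.bot : Form Agt := .and (.atom 0) (.neg (.atom 0))
def Form.top : Form Agt := .neg Form.bot

def EForm.toForm : EForm Agt → Form Agt
  | .atom p => .atom p
  | .neg φ => .neg φ.toForm
  | .and φ ψ => .and φ.toForm ψ.toForm
  | .know a φ => .know a φ.toForm

/-- The G-announcement ⋀_{i ∈ G} K_i (f i), with all f i epistemic. -/
noncomputable def GAnn (G : Finset Agt) (f : Agt → EForm Agt) : Form Agt :=
  (G.toList.map fun i => Form.know i (f i).toForm).foldr Form.and Form.top

/-- Epistemic models: states, an equivalence relation for each agent, a valuation. -/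
structure Model (Agt : Type) where
  W : Type
  rel : Agt → W → W → Prop
  rel_equiv : ∀ a, Equivalence (rel a)
  val : ℕ → W → Prop

/-- Updated model: restriction to the states satisfying S. -/
def Model.restrict (M : Model Agt) (S : M.W → Prop) : Model Agt where
  W := {v : M.W // S v}
  rel a u v := M.rel a u.1 v.1
  rel_equiv a := ⟨fun u => (M.rel_equiv a).refl u.1,
    fun h => (M.rel_equiv a).symm h, fun h h' => (M.rel_equiv a).trans h h'⟩
  val p v := M.val p v.1

/-- Satisfaction for purely epistemic formulas (standard S5 semantics). -/
def esat (M : Model Agt) : M.W → EForm Agt → Prop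
  | w, .atom p => M.val p w
  | w, .neg φ => ¬ esat M w φ
  | w, .and φ ψ => esat M w φ ∧ esat M w ψ
  | w, .know a φ => ∀ v, M.rel a w v → esat M v φ

/-- Truth of the G-announcement ⋀_{i∈G} K_i (f i) at (M,w). -/
def gsat (M : Model Agt) (w : M.W) (G : Finset Agt) (f : Agt → EForm Agt) : Prop :=
  ∀ i ∈ G, ∀ v, M.rel i w v → esat M v (f i)

variable [DecidableEq Agt] [Fintype Agt]

/-- Satisfaction for L_CoRGAL.
[φ]ψ: if φ is true then ψ holds in the model restricted to φ-states.
[G,χ]φ: χ is true and for every G-announcement ψ_G, [ψ_G ∧ χ]φ.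
[⟨G⟩]φ: for every G-announcement ψ_G there is an (A∖G)-announcement χ such
that if ψ_G is true then ⟨ψ_G ∧ χ⟩φ. -/
def sat : (M : Model Agt) → M.W → Form Agt → Prop
  | M, w, .atom p => M.val p w
  | M, w, .neg φ => ¬ sat M w φ
  | M, w, .and φ ψ => sat M w φ ∧ sat M w ψ
  | M, w, .know a φ => ∀ v, M.rel a w v → sat M v φ
  | M, w, .ann φ ψ =>
      ∀ h : sat M w φ, sat (M.restrict fun v => sat M v φ) ⟨w, h⟩ ψ
  | M, w, .group G χ φ =>
      sat M w χ ∧ ∀ f : Agt → EForm Agt,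
        ∀ h : gsat M w G f ∧ sat M w χ,
          sat (M.restrict fun v => gsat M v G f ∧ sat M v χ) ⟨w, h⟩ φ
  | M, w, .coal G φ =>
      ∀ f : Agt → EForm Agt, ∃ g : Agt → EForm Agt,
        gsat M w G f →
          ∃ h : gsat M w G f ∧ gsat M w Gᶜ g,
            sat (M.restrict fun v => gsat M v G f ∧ gsat M v Gᶜ g) ⟨w, h⟩ φ

/-- Validity: truth at every pointed epistemic model. -/
def valid (φ : Form Agt) : Prop := ∀ (M : Model Agt) (w : M.W), sat M w φ

/-- The dual coalition operator ⟨[G]⟩φ := ¬[⟨G⟩]¬φ. -/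
def coalDia (G : Finset Agt) (φ : Form Agt) : Form Agt := .neg (.coal G (.neg φ))

/-- Necessity forms η ::= ♯ | φ → η | K_a η | [φ]η. -/
inductive NForm (Agt : Type) : Type
  | hole : NForm Agt
  | imp  : Form Agt → NForm Agt → NForm Agt
  | know : Agt → NForm Agt → NForm Agt
  | ann  : Form Agt → NForm Agt → NForm Agt

/-- η(φ): replace the placeholder ♯ by φ. -/
def NForm.subst : NForm Agt → Form Agt → Form Agt
  | .hole, φ => φ
  | .imp ψ η, φ => ψ.imp (η.subst φ)
  | .know a η, φ => .know a (η.subst φ)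
  | .ann ψ η, φ => .ann ψ (η.subst φ)

/-- Instances of propositional tautologies (treating non-Boolean subformulas as atoms). -/
def Tautology (φ : Form Agt) : Prop :=
  ∀ v : Form Agt → Prop,
    (∀ ψ, v (Form.neg ψ) ↔ ¬ v ψ) →
    (∀ ψ χ, v (Form.and ψ χ) ↔ (v ψ ∧ v χ)) →
    v φ

/-- The axiom system CoRGAL: theorems. -/
inductive Thm {Agt : Type} [DecidableEq Agt] [Fintype Agt] : Form Agt → Prop
  | taut {φ : Form Agt} : Tautology φ → Thm φ
  | a1 (a : Agt) (φ ψ : Form Agt) :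
      Thm ((Form.know a (φ.imp ψ)).imp ((Form.know a φ).imp (Form.know a ψ)))
  | a2 (a : Agt) (φ : Form Agt) : Thm ((Form.know a φ).imp φ)
  | a3 (a : Agt) (φ : Form Agt) : Thm ((Form.know a φ).imp (Form.know a (Form.know a φ)))
  | a4 (a : Agt) (φ : Form Agt) :
      Thm ((Form.neg (Form.know a φ)).imp (Form.know a (Form.neg (Form.know a φ))))
  | a5 (φ : Form Agt) (p : ℕ) : Thm ((Form.ann φ (.atom p)).iff' (φ.imp (.atom p)))
  | a6 (φ ψ : Form Agt) : Thm ((Form.ann φ (.neg ψ)).iff' (φ.imp (.neg (Form.ann φ ψ))))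
  | a7 (φ ψ χ : Form Agt) :
      Thm ((Form.ann φ (.and ψ χ)).iff' ((Form.ann φ ψ).and (Form.ann φ χ)))
  | a8 (φ : Form Agt) (a : Agt) (ψ : Form Agt) :
      Thm ((Form.ann φ (.know a ψ)).iff' (φ.imp (.know a (Form.ann φ ψ))))
  | a9 (φ ψ χ : Form Agt) :
      Thm ((Form.ann φ (.ann ψ χ)).iff' (Form.ann (φ.and (Form.ann φ ψ)) χ))
  | a10 (G : Finset Agt) (χ φ : Form Agt) (f : Agt → EForm Agt) :
      Thm ((Form.group G χ φ).imp (χ.and (Form.ann ((GAnn G f).and χ) φ)))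
  | a11 (G : Finset Agt) (φ : Form Agt) (f : Agt → EForm Agt) :
      Thm ((Form.coal G φ).imp (.neg (Form.group Gᶜ (GAnn G f) (.neg φ))))
  | mp {φ ψ : Form Agt} : Thm (φ.imp ψ) → Thm φ → Thm ψ
  | necK (a : Agt) {φ : Form Agt} : Thm φ → Thm (Form.know a φ)
  | necAnn (ψ : Form Agt) {φ : Form Agt} : Thm φ → Thm (Form.ann ψ φ)
  | necGroup (G : Finset Agt) (χ : Form Agt) {φ : Form Agt} : Thm φ → Thm (Form.group G χ φ)
  | necCoal (G : Finset Agt) {φ : Form Agt} : Thm φ → Thm (Form.coal G φ)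
  | r5 {η : NForm Agt} {G : Finset Agt} {χ φ : Form Agt} :
      (∀ f : Agt → EForm Agt, Thm (η.subst (χ.and (Form.ann ((GAnn G f).and χ) φ)))) →
      Thm (η.subst (Form.group G χ φ))
  | r6 {η : NForm Agt} {G : Finset Agt} {φ : Form Agt} :
      (∀ f : Agt → EForm Agt, Thm (η.subst (.neg (Form.group Gᶜ (GAnn G f) (.neg φ))))) →
      Thm (η.subst (Form.coal G φ))

/-- A theory: contains all theorems, closed under modus ponens (R0), R5 and R6. -/
structure IsTheory (x : Set (Form Agt)) : Prop where
  mem_of_thm : ∀ {φ : Form Agt}, Thm φ → φ ∈ x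
  mp : ∀ {φ ψ : Form Agt}, φ.imp ψ ∈ x → φ ∈ x → ψ ∈ x
  r5 : ∀ (η : NForm Agt) (G : Finset Agt) (χ φ : Form Agt),
        (∀ f : Agt → EForm Agt, η.subst (χ.and (Form.ann ((GAnn G f).and χ) φ)) ∈ x) →
        η.subst (Form.group G χ φ) ∈ x
  r6 : ∀ (η : NForm Agt) (G : Finset Agt) (φ : Form Agt),
        (∀ f : Agt → EForm Agt, η.subst (.neg (Form.group Gᶜ (GAnn G f) (.neg φ))) ∈ x) →
        η.subst (Form.coal G φ) ∈ x

def Consistent (x : Set (Form Agt)) : Prop := Form.bot ∉ x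
def Maximal (x : Set (Form Agt)) : Prop := ∀ φ : Form Agt, φ ∈ x ∨ Form.neg φ ∈ x
def MCT (x : Set (Form Agt)) : Prop := IsTheory x ∧ Consistent x ∧ Maximal x

/-- The canonical model: worlds are maximal consistent theories. -/
def canonicalModel (Agt : Type) [DecidableEq Agt] [Fintype Agt] : Model Agt where
  W := {x : Set (Form Agt) // MCT x}
  rel a x y := {φ : Form Agt | Form.know a φ ∈ x.1} = {φ : Form Agt | Form.know a φ ∈ y.1}
  rel_equiv _ := ⟨fun _ => rfl, Eq.symm, Eq.trans⟩
  val p x := Form.atom p ∈ x.1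

/-- Size of a formula. -/
def fsize : Form Agt → ℕ
  | .atom _ => 1
  | .neg φ => fsize φ + 1
  | .know _ φ => fsize φ + 1
  | .group _ _ φ => fsize φ + 1
  | .coal _ φ => fsize φ + 1
  | .and φ ψ => fsize φ + fsize ψ + 1
  | .ann ψ φ => fsize ψ + 3 * fsize φ

/-- The [,]-depth. -/
def dG : Form Agt → ℕ
  | .atom _ => 0
  | .neg φ => dG φ
  | .know _ φ => dG φ
  | .coal _ φ => dG φ
  | .and φ ψ => max (dG φ) (dG ψ)
  | .ann ψ φ => dG ψ + dG φ
  | .group _ χ φ => dG χ + dG φ + 1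

/-- The [⟨⟩]-depth. -/
def dC : Form Agt → ℕ
  | .atom _ => 0
  | .neg φ => dC φ
  | .know _ φ => dC φ
  | .and φ ψ => max (dC φ) (dC ψ)
  | .ann ψ φ => dC ψ + dC φ
  | .group _ χ φ => dC χ + dC φ
  | .coal _ φ => dC φ + 1

/-- The well-founded order <^{Size}_{[,],[⟨⟩]}. -/
def measLt (φ ψ : Form Agt) : Prop :=
  dC φ < dC ψ ∨ (dC φ = dC ψ ∧ (dG φ < dG ψ ∨ (dG φ = dG ψ ∧ fsize φ < fsize ψ)))

end CoRGAL

open CoRGAL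

section Aux

variable {Agt : Type} [DecidableEq Agt] [Fintype Agt]

lemma esat_toForm (M : Model Agt) : ∀ (φ : EForm Agt) (w : M.W),
    sat M w φ.toForm ↔ esat M w φ := by
  intro φ
  induction φ with
  | atom p => intro w; simp [EForm.toForm, sat, esat]
  | neg φ ih => intro w; simp [EForm.toForm, sat, esat, ih]
  | and φ ψ ih1 ih2 => intro w; simp [EForm.toForm, sat, esat, ih1, ih2]
  | know a φ ih => intro w; simp [EForm.toForm, sat, esat, ih]

lemma sat_foldr (M : Model Agt) (f : Agt → EForm Agt) :
    ∀ (l : List Agt) (w : M.W),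
    sat M w ((l.map fun i => Form.know i (f i).toForm).foldr Form.and Form.top) ↔
      ∀ i ∈ l, ∀ v, M.rel i w v → esat M v (f i) := by
  intro l
  induction l with
  | nil =>
    intro w
    simp [sat, Form.top, Form.bot]
  | cons a l ih =>
    intro w
    simp only [List.map_cons, List.foldr_cons, sat, ih, List.mem_cons]
    constructor
    · rintro ⟨h1, h2⟩ i hi v hv
      rcases hi with rfl | hi
      · exact (esat_toForm M _ v).mp (h1 v hv)
      · exact h2 i hi v hv
    · intro h
      exact ⟨fun v hv => (esat_toForm M _ v).mpr (h a (Or.inl rfl) v hv),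
        fun i hi v hv => h i (Or.inr hi) v hv⟩

lemma sat_GAnn (M : Model Agt) (G : Finset Agt) (f : Agt → EForm Agt) (w : M.W) :
    sat M w (GAnn G f) ↔ gsat M w G f := by
  rw [GAnn, sat_foldr]
  constructor
  · intro h i hi; exact h i (Finset.mem_toList.mpr hi)
  · intro h i hi; exact h i (Finset.mem_toList.mp hi)

lemma restrict_congr (M : Model Agt) (P Q : M.W → Prop) (h : ∀ v, P v ↔ Q v)
    (w : M.W) (hP : P w) (hQ : Q w) (χ : Form Agt) :
    sat (M.restrict Q) ⟨w, hQ⟩ χ → sat (M.restrict P) ⟨w, hP⟩ χ := by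
  have hPQ : P = Q := funext fun v => propext (h v)
  subst hPQ
  exact id

lemma base_step (M : Model Agt) (w : M.W) (G : Finset Agt) (φ : Form Agt)
    (h : ∀ f : Agt → EForm Agt,
      sat M w (Form.neg (Form.group Gᶜ (GAnn G f) (Form.neg φ)))) :
    sat M w (Form.coal G φ) := by
  intro f
  by_cases hg : gsat M w G f
  · have hf := h f
    simp only [sat] at hf
    push_neg at hf
    have hGAnn : sat M w (GAnn G f) := (sat_GAnn M G f w).mpr hg
    rcases hf hGAnn with ⟨g, hh, hsat⟩
    refine ⟨g, fun _ => ?_⟩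
    have hpred : (fun v => gsat M v G f ∧ gsat M v Gᶜ g) =
        (fun v => gsat M v Gᶜ g ∧ sat M v (GAnn G f)) := by
      funext v
      exact propext ⟨fun ⟨h1, h2⟩ => ⟨h2, (sat_GAnn M G f v).mpr h1⟩,
        fun ⟨h1, h2⟩ => ⟨(sat_GAnn M G f v).mp h2, h1⟩⟩
    refine ⟨⟨hg, hh.1⟩, ?_⟩
    exact restrict_congr M _ _ (fun v => Iff.of_eq (congrFun hpred v)) w ⟨hg, hh.1⟩ hh φ hsat
  · exact ⟨fun _ => EForm.atom 0, fun hgf => absurd hgf hg⟩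

lemma nform_step (G : Finset Agt) (φ : Form Agt) :
    ∀ (η : NForm Agt) (M : Model Agt) (w : M.W),
      (∀ f : Agt → EForm Agt,
        sat M w (η.subst (Form.neg (Form.group Gᶜ (GAnn G f) (Form.neg φ))))) →
      sat M w (η.subst (Form.coal G φ)) := by
  intro η
  induction η with
  | hole => exact fun M w h => base_step M w G φ h
  | imp ψ η ih =>
    intro M w h
    simp only [NForm.subst, Form.imp, sat, not_and, not_not] at *
    intro hψ
    refine ih M w fun f => ?_
    exact h f hψ
  | know a η ih =>
    intro M w h
    simp only [NForm.subst, sat] at *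
    intro v hv
    exact ih M v fun f => h f v hv
  | ann ψ η ih =>
    intro M w h
    simp only [NForm.subst, sat] at *
    intro hψ
    exact ih _ _ fun f => h f hψ

end Aux

/-- Rule R6 preserves validity: if η(⟨A∖G, ψ_G⟩φ) is valid for every
G-announcement ψ_G, then η([⟨G⟩]φ) is valid. -/
theorem statement4 (Agt : Type) [DecidableEq Agt] [Fintype Agt]
    (η : NForm Agt) (G : Finset Agt) (φ : Form Agt)
    (h : ∀ f : Agt → EForm Agt,
      valid (η.subst (Form.neg (Form.group Gᶜ (GAnn G f) (Form.neg φ))))) :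
    valid (η.subst (Form.coal G φ)) := by
  intro M w
  exact nform_step G φ η M w fun f => h f M w
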